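/- arXiv:2301.06955 — 6 statements merged into one kernel-verified Lean document; each statement's English description precedes it below -/
import Mathlib

section
/- Let a ∈ ℝ², r > 0, p ∈ [1,2] and c > 0. Let g : ℝ² → [0,∞) be measurable with ∫₀^{2π} g(a + r(cos θ, sin θ))² · r dθ < ∞. Then (1/p) ∫₀^{2π} g(a + r(cos θ, sin θ))^p · r dθ − c^p/(p (2π r)^{p−1}) ≤ (2π r / c)^{2−p} · [ (1/2) ∫₀^{2π} g(a + r(cos θ, sin θ))² · r dθ − c²/(4π r) ]. -/
open Real MeasureTheory

/-! Pointwise, the weighted AM–GM inequality gives `t^p s^(2-p) ≤ (p/2) t² + (1 - p/2) s²`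
for `t, s ≥ 0` and `p ∈ [0, 2]`. Integrating it against a finite measure of total mass `L`
with the constant `s = c / L` and rearranging gives the estimate for any such measure; on the
circle the measure is `r dθ` on `(0, 2π]`, of mass `2πr`. -/

/-- The point `a + r(cos θ, sin θ)` on the circle of center `a` and radius `r` in the
Euclidean plane. -/
noncomputable def circlePt (a : EuclideanSpace ℝ (Fin 2)) (r θ : ℝ) :
    EuclideanSpace ℝ (Fin 2) :=
  a + r • (WithLp.equiv 2 (Fin 2 → ℝ)).symm ![Real.cos θ, Real.sin θ]

open Set

theorem rpow_mul_rpow_two_sub_le {t s p : ℝ} (ht : 0 ≤ t) (hs : 0 ≤ s) (hp0 : 0 ≤ p)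
    (hp2 : p ≤ 2) : t ^ p * s ^ (2 - p) ≤ p / 2 * t ^ 2 + (1 - p / 2) * s ^ 2 := by
  have h := geom_mean_le_arith_mean2_weighted (w₁ := p / 2) (w₂ := 1 - p / 2)
    (by linarith) (by linarith) (sq_nonneg t) (sq_nonneg s) (by ring)
  rwa [← rpow_natCast_mul ht, ← rpow_natCast_mul hs, Nat.cast_ofNat,
    mul_div_cancel₀ _ two_ne_zero, mul_sub, mul_one, mul_div_cancel₀ _ two_ne_zero] at h

section FiniteMeasure

variable {α : Type*} [MeasurableSpace α] {μ : Measure α} {f : α → ℝ}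

theorem MeasureTheory.Integrable.rpow_of_integrable_sq [IsFiniteMeasure μ] {p : ℝ}
    (hf2 : Integrable (fun x => f x ^ 2) μ) (hp0 : 0 ≤ p) (hp2 : p ≤ 2) (hf : 0 ≤ᵐ[μ] f) :
    Integrable (fun x => f x ^ p) μ := by
  -- `f` is a.e. equal to `√(f²)`, whence its measurability
  have hmeas : AEStronglyMeasurable f μ :=
    (continuous_sqrt.comp_aestronglyMeasurable hf2.1).congr
      (hf.mono fun x hx => sqrt_sq hx)
  refine ((hf2.const_mul (p / 2)).add (integrable_const (1 - p / 2))).mono'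
    (hmeas.aemeasurable.pow_const p).aestronglyMeasurable (hf.mono fun x hx => ?_)
  have := rpow_mul_rpow_two_sub_le hx zero_le_one hp0 hp2
  rw [one_rpow, mul_one, one_pow, mul_one] at this
  rwa [norm_of_nonneg (rpow_nonneg hx p)]

theorem rpow_two_sub_mul_integral_rpow_le [IsFiniteMeasure μ] {p s : ℝ} (hp0 : 0 ≤ p)
    (hp2 : p ≤ 2) (hs : 0 ≤ s) (hf : 0 ≤ᵐ[μ] f) (hf2 : Integrable (fun x => f x ^ 2) μ) :
    s ^ (2 - p) * ∫ x, f x ^ p ∂μ ≤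
      p / 2 * ∫ x, f x ^ 2 ∂μ + (1 - p / 2) * s ^ 2 * μ.real univ := by
  have hmaj : Integrable (fun x => p / 2 * f x ^ 2 + (1 - p / 2) * s ^ 2) μ :=
    (hf2.const_mul _).add (integrable_const _)
  calc s ^ (2 - p) * ∫ x, f x ^ p ∂μ = ∫ x, f x ^ p * s ^ (2 - p) ∂μ := by
        rw [mul_comm, integral_mul_const]
    _ ≤ ∫ x, p / 2 * f x ^ 2 + (1 - p / 2) * s ^ 2 ∂μ :=
        integral_mono_ae ((hf2.rpow_of_integrable_sq hp0 hp2 hf).mul_const _) hmaj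
          (hf.mono fun x hx => rpow_mul_rpow_two_sub_le hx hs hp0 hp2)
    _ = p / 2 * ∫ x, f x ^ 2 ∂μ + (1 - p / 2) * s ^ 2 * μ.real univ := by
        rw [integral_add (hf2.const_mul _) (integrable_const _), integral_const_mul,
          integral_const, smul_eq_mul, mul_comm (μ.real univ)]

theorem div_rpow_pred_eq_div_rpow_two_sub_mul {c L p : ℝ} (hc : 0 < c) (hL : 0 < L) :
    c ^ p / L ^ (p - 1) = (L / c) ^ (2 - p) * (c ^ 2 / L) := by
  rw [rpow_sub_one hL.ne', div_rpow hL.le hc.le, rpow_sub hL, rpow_sub hc, rpow_two, rpow_two]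
  have := rpow_pos_of_pos hc p
  have := rpow_pos_of_pos hL p
  field_simp

theorem holder_type_estimate [IsFiniteMeasure μ] (hμ : 0 < μ.real univ) {p c : ℝ}
    (hp0 : 0 < p) (hp2 : p ≤ 2) (hc : 0 < c) (hf : 0 ≤ᵐ[μ] f)
    (hf2 : Integrable (fun x => f x ^ 2) μ) :
    1 / p * ∫ x, f x ^ p ∂μ - c ^ p / (p * μ.real univ ^ (p - 1)) ≤
      (μ.real univ / c) ^ (2 - p) *
        (1 / 2 * ∫ x, f x ^ 2 ∂μ - c ^ 2 / (2 * μ.real univ)) := by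
  have key := rpow_two_sub_mul_integral_rpow_le hp0.le hp2 (div_pos hc hμ).le hf hf2
  set L := μ.real univ
  set q := (L / c) ^ (2 - p)
  have hsq : (c / L) ^ (2 - p) * q = 1 := by
    rw [← mul_rpow (div_pos hc hμ).le (div_pos hμ hc).le, div_mul_div_comm, mul_comm c,
      div_self (mul_pos hμ hc).ne', one_rpow]
  have hs2 : (c / L) ^ 2 * L = c ^ 2 / L := by field_simp
  rw [mul_assoc (1 - p / 2), hs2] at key
  have hbound : 1 / p * ∫ x, f x ^ p ∂μ ≤
      q * (1 / 2 * ∫ x, f x ^ 2 ∂μ) + q * (c ^ 2 / L) / p - q * (c ^ 2 / (2 * L)) := by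
    calc 1 / p * ∫ x, f x ^ p ∂μ
      _ = 1 / p * (q * ((c / L) ^ (2 - p) * ∫ x, f x ^ p ∂μ)) := by
          rw [← mul_assoc q, mul_comm q, hsq, one_mul]
      _ ≤ 1 / p * (q * (p / 2 * ∫ x, f x ^ 2 ∂μ + (1 - p / 2) * (c ^ 2 / L))) := by
          gcongr
      _ = _ := by field_simp; ring
  rw [mul_comm p, ← div_div, div_rpow_pred_eq_div_rpow_two_sub_mul hc hμ]
  linarith

end FiniteMeasure

theorem intervalIntegral_mul_const_eq_integral_smul_measure (f : ℝ → ℝ) {a b r : ℝ}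
    (hab : a ≤ b) (hr : 0 ≤ r) :
    ∫ θ in a..b, f θ * r = ∫ θ, f θ ∂(r.toNNReal • volume.restrict (Ioc a b)) := by
  rw [integral_smul_nnreal_measure, intervalIntegral.integral_of_le hab, integral_mul_const,
    NNReal.smul_def, Real.coe_toNNReal r hr, smul_eq_mul, mul_comm]

theorem integrable_smul_measure_of_intervalIntegrable_mul_const {f : ℝ → ℝ} {a b r : ℝ}
    (hr : 0 < r) (hf : IntervalIntegrable (fun θ => f θ * r) volume a b) :
    Integrable f (r.toNNReal • volume.restrict (Ioc a b)) := by
  refine Integrable.smul_measure_nnreal ?_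
  have hf' := (hf.mul_const r⁻¹).1
  simp only [mul_inv_cancel_right₀ hr.ne'] at hf'
  exact hf'

theorem holder_type_circle_estimate_general (a : EuclideanSpace ℝ (Fin 2)) (r : ℝ) (hr : 0 < r)
    (p : ℝ) (hp1 : 1 ≤ p) (hp2 : p ≤ 2) (c : ℝ) (hc : 0 < c)
    (g : EuclideanSpace ℝ (Fin 2) → ℝ) (hgnn : ∀ x, 0 ≤ g x)
    (hint : IntervalIntegrable (fun θ => g (circlePt a r θ) ^ 2 * r) volume 0 (2 * π)) :
    (1 / p) * (∫ θ in (0:ℝ)..(2 * π), g (circlePt a r θ) ^ p * r)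
        - c ^ p / (p * (2 * π * r) ^ (p - 1)) ≤
      (2 * π * r / c) ^ (2 - p) *
        ((1 / 2) * (∫ θ in (0:ℝ)..(2 * π), g (circlePt a r θ) ^ 2 * r)
          - c ^ 2 / (4 * π * r)) := by
  have h2π : (0 : ℝ) ≤ 2 * π := by positivity
  set μ := r.toNNReal • volume.restrict (Ioc 0 (2 * π))
  have hμ : μ.real univ = 2 * π * r := by
    simp [μ, measureReal_nnreal_smul_apply, Real.volume_real_Ioc, hr.le, pi_nonneg, mul_comm]
  have h := holder_type_estimate (μ := μ) (by rw [hμ]; positivity) (by linarith) hp2 hc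
    (Filter.Eventually.of_forall fun θ => hgnn (circlePt a r θ))
    (integrable_smul_measure_of_intervalIntegrable_mul_const hr hint)
  rwa [hμ, ← intervalIntegral_mul_const_eq_integral_smul_measure _ h2π hr.le,
    ← intervalIntegral_mul_const_eq_integral_smul_measure _ h2π hr.le,
    show 2 * (2 * π * r) = 4 * π * r by ring] at h

/-- Hölder-type estimate on circles (Lemma 2.22 of the paper): for a measurable
nonnegative `g` whose square is integrable on the circle `∂B(a;r)`, any `p ∈ [1,2]`
and any constant `c > 0`,
`(1/p)∫ g^p r dθ - c^p/(p (2πr)^{p-1}) ≤ (2πr/c)^{2-p} [ (1/2)∫ g² r dθ - c²/(4πr) ]`. -/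
theorem holder_type_circle_estimate (a : EuclideanSpace ℝ (Fin 2)) (r : ℝ) (hr : 0 < r)
    (p : ℝ) (hp1 : 1 ≤ p) (hp2 : p ≤ 2) (c : ℝ) (hc : 0 < c)
    (g : EuclideanSpace ℝ (Fin 2) → ℝ) (hg : Measurable g) (hgnn : ∀ x, 0 ≤ g x)
    (hint : IntervalIntegrable (fun θ => g (circlePt a r θ) ^ 2 * r) volume 0 (2 * π)) :
    (1 / p) * (∫ θ in (0:ℝ)..(2 * π), g (circlePt a r θ) ^ p * r)
        - c ^ p / (p * (2 * π * r) ^ (p - 1)) ≤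
      (2 * π * r / c) ^ (2 - p) *
        ((1 / 2) * (∫ θ in (0:ℝ)..(2 * π), g (circlePt a r θ) ^ 2 * r)
          - c ^ 2 / (4 * π * r)) :=
  holder_type_circle_estimate_general a r hr p hp1 hp2 c hc g hgnn hint
end

section
/- If a, b ≥ 0 are real numbers and p ∈ [1,2], then a^p/p + a^{p−1}(b − a) + (1 − 1/p)·((b − a)_+)^p ≤ ((3 − p)/2) · b^p. -/
open Real Set

private lemma two_rpow_le_one_add (u : ℝ) (h0 : 0 ≤ u) (h1 : u ≤ 1) :
    (2:ℝ) ^ u ≤ 1 + u := by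
  have hc := convexOn_exp.2 (Set.mem_univ (0:ℝ)) (Set.mem_univ (Real.log 2))
      (by linarith : (0:ℝ) ≤ 1 - u) h0 (by ring)
  simp only [smul_eq_mul, mul_zero, zero_add, Real.exp_zero, Real.exp_log two_pos] at hc
  rw [Real.rpow_def_of_pos two_pos]
  calc Real.exp (Real.log 2 * u) = Real.exp ((1-u) * 0 + u * Real.log 2) := by ring_nf
    _ ≤ (1-u) * 1 + u * 2 := by simpa using hc
    _ = 1 + u := by ring

private lemma tangent_ineq (p a b : ℝ) (hp : 1 ≤ p) (ha : 0 < a) (hb : 0 ≤ b) :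
    a ^ p + p * (a ^ (p-1) * (b - a)) ≤ b ^ p := by
  have hber := one_add_mul_self_le_rpow_one_add (s := b/a - 1)
      (by have := div_nonneg hb ha.le; linarith) hp
  have h1 : (1 : ℝ) + (b/a - 1) = b/a := by ring
  rw [h1] at hber
  have hdiv : (b/a) ^ p = b ^ p / a ^ p := Real.div_rpow hb ha.le p
  have hap : (0:ℝ) < a ^ p := Real.rpow_pos_of_pos ha p
  have := mul_le_mul_of_nonneg_left hber hap.le
  rw [hdiv, mul_div_cancel₀ _ hap.ne'] at this
  have he : a ^ p * (1 + p * (b/a - 1)) = a ^ p + p * (a ^ (p-1) * (b - a)) := by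
    have : a ^ (p-1) = a ^ p / a := by
      rw [Real.rpow_sub ha, Real.rpow_one]
    rw [this]
    field_simp
  linarith [he ▸ this]

private lemma g_le (p : ℝ) (hp1 : 1 < p) (hp2 : p ≤ 2) (t : ℝ)
    (ht0 : 0 ≤ t) (ht1 : t ≤ 1) :
    t ^ p / p + t ^ (p-1) * (1 - t) + (1 - 1/p) * (1 - t) ^ p ≤ (2:ℝ) ^ (1 - p) := by
  have hp0 : (0:ℝ) < p := by linarith
  set G : ℝ → ℝ := fun x => x ^ p / p + x ^ (p-1) * (1 - x) + (1 - 1/p) * (1 - x) ^ p with hG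
  -- derivative on (0,1)
  have hderiv : ∀ x ∈ Set.Ioo (0:ℝ) 1,
      HasDerivAt G ((p-1) * (1-x) * (x ^ (p-2) - (1-x) ^ (p-2))) x := by
    intro x hx
    obtain ⟨hx0, hx1⟩ := hx
    have hx1' : (0:ℝ) < 1 - x := by linarith
    have h1 : HasDerivAt (fun y : ℝ => y ^ p) (p * x ^ (p-1)) x :=
      Real.hasDerivAt_rpow_const (Or.inl hx0.ne')
    have h2 : HasDerivAt (fun y : ℝ => y ^ (p-1)) ((p-1) * x ^ (p-1-1)) x :=
      Real.hasDerivAt_rpow_const (Or.inl hx0.ne')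
    have h3 : HasDerivAt (fun y : ℝ => 1 - y) (-1) x := by
      simpa using (hasDerivAt_id x).const_sub 1
    have h4 : HasDerivAt (fun y : ℝ => (1 - y) ^ p) (p * (1-x) ^ (p-1) * (-1)) x :=
      (Real.hasDerivAt_rpow_const (p := p) (Or.inl hx1'.ne')).comp x h3
    have h5 : HasDerivAt G
        ((p * x ^ (p-1)) / p + ((p-1) * x ^ (p-1-1) * (1-x) + x ^ (p-1) * (-1))
          + (1 - 1/p) * (p * (1-x) ^ (p-1) * (-1))) x :=
      ((h1.div_const p).add (h2.mul h3)).add (h4.const_mul (1 - 1/p))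
    convert h5 using 1
    have e1 : (1 - 1/p) * p = p - 1 := by field_simp
    have e2 : (1-x) ^ (p-1) = (1-x) ^ (p-2) * (1-x) := by
      rw [← Real.rpow_add_one hx1'.ne' (p-2)]
      congr 1
      ring
    have e3 : p - 1 - 1 = p - 2 := by ring
    rw [e3, mul_div_cancel_left₀ _ hp0.ne', e2]
    field_simp
    ring
  have hcont : Continuous G := by
    have c1 : Continuous fun y : ℝ => y ^ p := Real.continuous_rpow_const hp0.le
    have c2 : Continuous fun y : ℝ => y ^ (p-1) := Real.continuous_rpow_const (by linarith)
    have c3 : Continuous fun y : ℝ => (1-y) ^ p :=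
      (Real.continuous_rpow_const hp0.le).comp (continuous_const.sub continuous_id)
    exact ((c1.div_const p).add (c2.mul (continuous_const.sub continuous_id))).add
      (continuous_const.mul c3)
  have hmono : MonotoneOn G (Set.Icc 0 (1/2)) := by
    apply monotoneOn_of_deriv_nonneg (convex_Icc _ _) hcont.continuousOn
    · intro x hx
      rw [interior_Icc] at hx
      exact ((hderiv x ⟨hx.1, by linarith [hx.2]⟩).differentiableAt).differentiableWithinAt
    · intro x hx
      rw [interior_Icc] at hx
      obtain ⟨hx0, hx12⟩ := hx
      rw [(hderiv x ⟨hx0, by linarith⟩).deriv]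
      apply mul_nonneg (mul_nonneg (by linarith) (by linarith))
      have : (1-x) ^ (p-2) ≤ x ^ (p-2) :=
        Real.rpow_le_rpow_of_nonpos hx0 (by linarith) (by linarith)
      linarith
  have hanti : AntitoneOn G (Set.Icc (1/2) 1) := by
    apply antitoneOn_of_deriv_nonpos (convex_Icc _ _) hcont.continuousOn
    · intro x hx
      rw [interior_Icc] at hx
      exact ((hderiv x ⟨by linarith [hx.1], hx.2⟩).differentiableAt).differentiableWithinAt
    · intro x hx
      rw [interior_Icc] at hx
      obtain ⟨hx12, hx1⟩ := hx
      rw [(hderiv x ⟨by linarith, hx1⟩).deriv]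
      have h1x : (0:ℝ) < 1 - x := by linarith
      have hsub : x ^ (p-2) ≤ (1-x) ^ (p-2) :=
        Real.rpow_le_rpow_of_nonpos h1x (by linarith) (by linarith)
      have : (p-1) * (1-x) ≥ 0 := mul_nonneg (by linarith) (by linarith)
      nlinarith
  have hval : G (1/2) = (2:ℝ) ^ (1 - p) := by
    have h12 : ((1:ℝ)/2) ^ (p-1) * (1/2) = (1/2:ℝ) ^ p := by
      rw [← Real.rpow_add_one (by norm_num : (1/2:ℝ) ≠ 0) (p-1)]
      norm_num
    have h2 : ((1:ℝ)/2) ^ p = (2:ℝ) ^ (-p) := by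
      rw [one_div, Real.inv_rpow (by norm_num : (0:ℝ) ≤ 2), ← Real.rpow_neg (by norm_num)]
    have h3 : (2:ℝ) ^ (1-p) = 2 * (2:ℝ) ^ (-p) := by
      rw [show (1-p : ℝ) = 1 + (-p) by ring, Real.rpow_add two_pos, Real.rpow_one]
    simp only [hG]
    rw [show (1:ℝ) - 1/2 = 1/2 by norm_num, h12, h2, h3]
    field_simp
    ring
  have key : G t ≤ G (1/2) := by
    rcases le_total t (1/2) with h | h
    · exact hmono ⟨ht0, h⟩ ⟨by norm_num, le_refl _⟩ h
    · exact hanti ⟨le_refl _, by norm_num⟩ ⟨h, ht1⟩ h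
  calc G t ≤ G (1/2) := key
    _ = (2:ℝ) ^ (1-p) := hval

/-- Algebraic inequality underlying the mixed Marcinkiewicz estimate
(Lemma 4.7 of the paper): for `a, b ≥ 0` and `p ∈ [1,2]`,
`a^p/p + a^{p-1}(b-a) + (1 - 1/p)((b-a)_+)^p ≤ ((3-p)/2) b^p`. -/
theorem algebraic_lemma (p a b : ℝ) (hp1 : 1 ≤ p) (hp2 : p ≤ 2)
    (ha : 0 ≤ a) (hb : 0 ≤ b) :
    a ^ p / p + a ^ (p - 1) * (b - a) + (1 - 1 / p) * (max (b - a) 0) ^ p ≤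
      (3 - p) / 2 * b ^ p := by
  rcases hp1.eq_or_lt with h | hp
  · -- p = 1
    subst h
    norm_num [Real.rpow_one, Real.rpow_zero]
  have hp0 : (0:ℝ) < p := by linarith
  have hbp : (0:ℝ) ≤ b ^ p := Real.rpow_nonneg hb p
  have hfrac : 1/p ≤ (3-p)/2 := by
    rw [div_le_div_iff₀ hp0 two_pos]
    nlinarith
  by_cases hab : b ≤ a
  · -- max = 0 case
    rw [max_eq_right (by linarith), Real.zero_rpow hp0.ne', mul_zero, add_zero]
    rcases ha.eq_or_lt with h0 | h0
    · have hb0 : b = 0 := le_antisymm (h0 ▸ hab) hb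
      subst hb0
      rw [← h0]
      rw [Real.zero_rpow hp0.ne', Real.zero_rpow (by linarith : p - 1 ≠ 0)]
      norm_num
    · have htan := tangent_ineq p a b hp.le h0 hb
      have h1 : a ^ p / p + a ^ (p-1) * (b - a) ≤ b ^ p / p := by
        rw [div_add' _ _ _ hp0.ne', div_le_div_iff₀ hp0 hp0]
        nlinarith
      calc a ^ p / p + a ^ (p-1) * (b - a) ≤ b ^ p / p := h1
        _ = b ^ p * (1/p) := by ring
        _ ≤ b ^ p * ((3-p)/2) := mul_le_mul_of_nonneg_left hfrac hbp
        _ = (3-p)/2 * b ^ p := by ring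
  · push_neg at hab
    have hbpos : 0 < b := lt_of_le_of_lt ha hab
    rw [max_eq_left (by linarith)]
    set t := a / b with hts
    have ht0 : 0 ≤ t := div_nonneg ha hbpos.le
    have ht1 : t ≤ 1 := (div_le_one hbpos).mpr hab.le
    have ea : a = t * b := (div_mul_cancel₀ a hbpos.ne').symm
    have eba : b - a = (1 - t) * b := by rw [ea]; ring
    have e4 : b ^ (p-1) * b = b ^ p := by
      rw [← Real.rpow_add_one hbpos.ne' (p-1)]; norm_num
    have key := g_le p hp hp2 t ht0 ht1
    have hmul := mul_le_mul_of_nonneg_right key hbp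
    have h2le : (2:ℝ) ^ (1-p) ≤ (3-p)/2 := by
      have h := two_rpow_le_one_add (2-p) (by linarith) (by linarith)
      have e : (2:ℝ) ^ (2-p) = 2 * (2:ℝ) ^ (1-p) := by
        rw [show (2-p:ℝ) = 1 + (1-p) by ring, Real.rpow_add two_pos, Real.rpow_one]
      rw [e] at h
      linarith
    have heq : a ^ p / p + a ^ (p-1) * (b - a) + (1 - 1/p) * (b - a) ^ p
        = (t ^ p / p + t ^ (p-1) * (1 - t) + (1 - 1/p) * (1 - t) ^ p) * b ^ p := by
      rw [eba, ea, Real.mul_rpow ht0 hb, Real.mul_rpow ht0 hb,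
        Real.mul_rpow (by linarith : (0:ℝ) ≤ 1 - t) hb]
      rw [show t ^ (p-1) * b ^ (p-1) * ((1-t) * b) = t ^ (p-1) * (1-t) * (b ^ (p-1) * b) by ring,
        e4]
      ring
    calc a ^ p / p + a ^ (p-1) * (b - a) + (1 - 1/p) * (b - a) ^ p
        = (t ^ p / p + t ^ (p-1) * (1 - t) + (1 - 1/p) * (1 - t) ^ p) * b ^ p := heq
      _ ≤ (2:ℝ) ^ (1-p) * b ^ p := hmul
      _ ≤ (3-p)/2 * b ^ p := mul_le_mul_of_nonneg_right h2le hbp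
end

section
/- Let B_1, …, B_n be finitely many closed disks in ℝ² (closed balls B(a_i; ρ_i) with ρ_i ≥ 0). Then there exists a finite family of pairwise disjoint closed disks B(c_1; σ_1), …, B(c_m; σ_m) in ℝ² such that every disk B(a_i; ρ_i) of the original family is contained in some disk B(c_j; σ_j) of the new family, and the sum of the radii is conserved: σ_1 + ⋯ + σ_m = ρ_1 + ⋯ + ρ_n. -/
/-!
Two intersecting disks `B(a₁, ρ₁)` and `B(a₂, ρ₂)` have `dist a₁ a₂ ≤ ρ₁ + ρ₂`, so some point `c`
satisfies `dist a₁ c ≤ ρ₂` and `dist c a₂ ≤ ρ₁`, and `B(c, ρ₁ + ρ₂)` contains both. Replacing the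
two disks by this one keeps the total radius and lowers the number of disks, so repeating the
merge ends with a pairwise disjoint family.
-/

open Metric Function

section Merging

variable {E : Type*} [NormedAddCommGroup E] [NormedSpace ℝ E]

theorem exists_closedBall_add_superset_of_nonempty_inter {a₁ a₂ : E} {ρ₁ ρ₂ : ℝ}
    (h : (closedBall a₁ ρ₁ ∩ closedBall a₂ ρ₂).Nonempty) :
    ∃ c, closedBall a₁ ρ₁ ⊆ closedBall c (ρ₁ + ρ₂) ∧
      closedBall a₂ ρ₂ ⊆ closedBall c (ρ₁ + ρ₂) := by
  obtain ⟨x, hx₁, hx₂⟩ := h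
  have hρ₁ : 0 ≤ ρ₁ := nonempty_closedBall.mp ⟨x, hx₁⟩
  have hρ₂ : 0 ≤ ρ₂ := nonempty_closedBall.mp ⟨x, hx₂⟩
  have hdist : dist a₁ a₂ ≤ ρ₁ + ρ₂ :=
    (dist_triangle_right a₁ a₂ x).trans <|
      add_le_add (mem_closedBall'.mp hx₁) (mem_closedBall'.mp hx₂)
  obtain ⟨c, hc₁, hc₂⟩ := exists_dist_le_le hρ₂ hρ₁ hdist
  exact ⟨c, closedBall_subset_closedBall' (by linarith),
    closedBall_subset_closedBall' (by rw [dist_comm]; linarith)⟩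

theorem exists_merge_of_not_pairwise_disjoint (l : List (E × ℝ)) (hl : ∀ p ∈ l, 0 ≤ p.2)
    (hl_disj : ¬ l.Pairwise (Disjoint on uncurry closedBall)) :
    ∃ l' : List (E × ℝ), l'.length < l.length ∧ (∀ q ∈ l', 0 ≤ q.2) ∧
      (∀ p ∈ l, ∃ q ∈ l', uncurry closedBall p ⊆ uncurry closedBall q) ∧
      (l'.map Prod.snd).sum = (l.map Prod.snd).sum := by
  obtain ⟨p, q, hpq, hpq_meet⟩ : ∃ p q, List.Sublist [p, q] l ∧
      ¬ Disjoint (uncurry closedBall p) (uncurry closedBall q) := by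
    simpa [List.pairwise_iff_forall_sublist, onFun] using hl_disj
  obtain ⟨r, hperm⟩ := hpq.exists_perm_append
  obtain ⟨c, hpc, hqc⟩ := exists_closedBall_add_superset_of_nonempty_inter
    (Set.not_disjoint_iff_nonempty_inter.mp hpq_meet)
  have hmem : ∀ {x}, x ∈ l ↔ x = p ∨ x = q ∨ x ∈ r := by simp [hperm.mem_iff]
  refine ⟨(c, p.2 + q.2) :: r, by simp [hperm.length_eq], ?_, fun x hx => ?_, ?_⟩
  · simp only [List.mem_cons, forall_eq_or_imp]
    exact ⟨add_nonneg (hl p (hmem.2 (.inl rfl))) (hl q (hmem.2 (.inr (.inl rfl)))),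
      fun x hx => hl x (hmem.2 (.inr (.inr hx)))⟩
  · rcases hmem.1 hx with rfl | rfl | hx
    exacts [⟨_, List.mem_cons_self, hpc⟩, ⟨_, List.mem_cons_self, hqc⟩,
      ⟨x, List.mem_cons_of_mem _ hx, subset_rfl⟩]
  · simp [(hperm.map Prod.snd).sum_eq, add_assoc]

theorem exists_pairwise_disjoint_closedBall_cover (l : List (E × ℝ)) (hl : ∀ p ∈ l, 0 ≤ p.2) :
    ∃ t : List (E × ℝ), (∀ q ∈ t, 0 ≤ q.2) ∧ t.Pairwise (Disjoint on uncurry closedBall) ∧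
      (∀ p ∈ l, ∃ q ∈ t, uncurry closedBall p ⊆ uncurry closedBall q) ∧
      (t.map Prod.snd).sum = (l.map Prod.snd).sum := by
  by_cases hl_disj : l.Pairwise (Disjoint on uncurry closedBall)
  · exact ⟨l, hl, hl_disj, fun p hp => ⟨p, hp, subset_rfl⟩, rfl⟩
  obtain ⟨l', hlen, hl', hl'_cover, hl'_sum⟩ := exists_merge_of_not_pairwise_disjoint l hl hl_disj
  obtain ⟨t, ht, ht_disj, ht_cover, ht_sum⟩ := exists_pairwise_disjoint_closedBall_cover l' hl'
  refine ⟨t, ht, ht_disj, fun p hp => ?_, ht_sum.trans hl'_sum⟩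
  obtain ⟨q, hq, hpq⟩ := hl'_cover p hp
  obtain ⟨u, hu, hqu⟩ := ht_cover q hq
  exact ⟨u, hu, hpq.trans hqu⟩
termination_by l.length

end Merging

/-- The merging disks lemma (Lemma 4.4 of the paper): any finite family of closed disks
in the plane can be replaced by a finite family of pairwise disjoint closed disks
covering the original ones and with the same sum of radii. -/
theorem merging_disks (n : ℕ) (a : Fin n → EuclideanSpace ℝ (Fin 2)) (ρ : Fin n → ℝ)
    (hρ : ∀ i, 0 ≤ ρ i) :
    ∃ (m : ℕ) (c : Fin m → EuclideanSpace ℝ (Fin 2)) (σ : Fin m → ℝ),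
      (∀ j, 0 ≤ σ j) ∧
      (∀ j j', j ≠ j' → Disjoint (closedBall (c j) (σ j)) (closedBall (c j') (σ j'))) ∧
      (∀ i, ∃ j, closedBall (a i) (ρ i) ⊆ closedBall (c j) (σ j)) ∧
      (∑ j, σ j = ∑ i, ρ i) := by
  obtain ⟨t, hnonneg, hdisj, hcover, hsum⟩ :=
    exists_pairwise_disjoint_closedBall_cover (List.ofFn fun i => (a i, ρ i))
      (by simpa [List.mem_ofFn] using hρ)
  refine ⟨t.length, fun j => t[j].1, fun j => t[j].2, fun j => hnonneg _ (List.getElem_mem _),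
    fun j j' hne => ?_, fun i => ?_, ?_⟩
  · rcases hne.lt_or_gt with h | h
    exacts [hdisj.rel_get_of_lt h, (hdisj.rel_get_of_lt h).symm]
  · obtain ⟨q, hq, hsub⟩ := hcover (a i, ρ i) (List.mem_ofFn.mpr ⟨i, rfl⟩)
    obtain ⟨j, hj, rfl⟩ := List.mem_iff_getElem.mp hq
    exact ⟨⟨j, hj⟩, hsub⟩
  · simpa [List.map_ofFn, Fin.sum_ofFn] using hsum
end

section
/- Let Ω ⊂ ℝ^d be a bounded measurable set, let (p_n) be a sequence in [1,2) increasing to 2, and let v_n : Ω → ℝ^μ be measurable with sup_n ∫_Ω |v_n|^{p_n} < +∞. Assume that v : Ω → ℝ^μ is measurable and that for every p ∈ (1,2), for all sufficiently large n the functions v_n belong to L^p(Ω; ℝ^μ) and v_n converges to v weakly in L^p(Ω; ℝ^μ). Then ∫_Ω |v|² ≤ liminf_{n→∞} ∫_Ω |v_n|^{p_n}. -/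
/-!
Test the weak convergence against the truncation `g = w · 1_{|w| ≤ R}`, which is bounded and
hence lies in every `L^s(Ω)`. Hölder's inequality with the conjugate pair `(p_n, p_n')` gives
`∫ |g|² = lim ∫ ⟪v_n, g⟫ ≤ liminf ‖v_n‖_{p_n} ‖g‖_{p_n'}`. Since `g` is bounded and `p_n' ↘ 2`,
`limsup ‖g‖_{p_n'} ≤ ‖g‖_2`; since `∫ |v_n|^{p_n}` is bounded and `p_n ↗ 2`,
`liminf ‖v_n‖_{p_n} ≤ (liminf ∫ |v_n|^{p_n})^{1/2}`. Dividing by `‖g‖_2` and letting `R → ∞`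
by monotone convergence gives the claim.
-/

open MeasureTheory Filter ENNReal Topology
open scoped RealInnerProductSpace NNReal

namespace ENNReal

variable {ι : Type*} {l : Filter ι} {e : ι → ℝ} {e₀ : ℝ}

theorem tendsto_const_rpow {x : ℝ≥0∞} (hx0 : x ≠ 0) (hxt : x ≠ ⊤) (he : Tendsto e l (𝓝 e₀)) :
    Tendsto (fun i => x ^ e i) l (𝓝 (x ^ e₀)) := by
  lift x to ℝ≥0 using hxt
  have hx0' : x ≠ 0 := by exact_mod_cast hx0
  simp_rw [← ENNReal.coe_rpow_of_ne_zero hx0']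
  exact ENNReal.tendsto_coe.2 (tendsto_const_nhds.nnrpow he (Or.inl hx0'))

theorem tendsto_const_rpow_of_pos (x : ℝ≥0∞) (he₀ : 0 < e₀) (he : Tendsto e l (𝓝 e₀)) :
    Tendsto (fun i => x ^ e i) l (𝓝 (x ^ e₀)) := by
  have hpos : ∀ᶠ i in l, 0 < e i := he.eventually_const_lt he₀
  rcases eq_or_ne x 0 with rfl | hx0
  · refine tendsto_const_nhds.congr' (hpos.mono fun i hi => ?_)
    simp [zero_rpow_of_pos he₀, zero_rpow_of_pos hi]
  rcases eq_or_ne x ⊤ with rfl | hxt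
  · refine tendsto_const_nhds.congr' (hpos.mono fun i hi => ?_)
    simp [top_rpow_of_pos he₀, top_rpow_of_pos hi]
  exact tendsto_const_rpow hx0 hxt he

theorem rpow_le_rpow_mul_rpow_sub {x M : ℝ≥0∞} {e e' : ℝ} (hxM : x ≤ M) (he : 0 ≤ e)
    (hee' : e ≤ e') : x ^ e' ≤ x ^ e * M ^ (e' - e) :=
  calc x ^ e' = x ^ e * x ^ (e' - e) := by
        rw [← rpow_add_of_nonneg _ _ he (sub_nonneg.2 hee'), add_sub_cancel]
    _ ≤ x ^ e * M ^ (e' - e) := by gcongr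

theorem liminf_rpow_le [l.NeBot] {a : ι → ℝ≥0∞} {M : ℝ≥0∞} (hM : M ≠ ⊤)
    (haM : ∀ᶠ i in l, a i ≤ M) (he₀ : 0 ≤ e₀) (he : Tendsto e l (𝓝 e₀))
    (hle : ∀ᶠ i in l, e₀ ≤ e i) : liminf (fun i => a i ^ e i) l ≤ liminf a l ^ e₀ := by
  have hM1 : M + 1 ≠ 0 := by simp
  have hM1t : M + 1 ≠ ⊤ := add_ne_top.2 ⟨hM, one_ne_top⟩
  have hexp : Tendsto (fun i => (M + 1) ^ (e i - e₀)) l (𝓝 1) := by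
    simpa using tendsto_const_rpow hM1 hM1t (he.sub_const e₀)
  calc liminf (fun i => a i ^ e i) l
      ≤ liminf ((fun i => (M + 1) ^ (e i - e₀)) * fun i => a i ^ e₀) l := by
        refine liminf_le_liminf ((haM.and hle).mono fun i ⟨hai, hi⟩ => ?_)
        rw [Pi.mul_apply, mul_comm]
        exact rpow_le_rpow_mul_rpow_sub (hai.trans le_self_add) he₀ hi
    _ ≤ limsup (fun i => (M + 1) ^ (e i - e₀)) l * liminf (fun i => a i ^ e₀) l :=
        ENNReal.liminf_mul_le (by simp [hexp.limsup_eq]) (by simp [hexp.limsup_eq])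
    _ = liminf a l ^ e₀ := by
        rw [hexp.limsup_eq, one_mul]
        exact ((monotone_rpow_of_nonneg he₀).map_liminf_of_continuousAt a
          continuous_rpow_const.continuousAt).symm

theorem le_of_le_rpow_half_mul {a b : ℝ≥0∞} (ha : a ≠ ⊤)
    (h : a ≤ a ^ (1 / 2 : ℝ) * b ^ (1 / 2 : ℝ)) : a ≤ b := by
  rcases eq_or_ne a 0 with rfl | ha0
  · exact zero_le
  have hsq : ∀ x : ℝ≥0∞, x = x ^ (1 / 2 : ℝ) * x ^ (1 / 2 : ℝ) := fun x => by
    rw [← rpow_add_of_nonneg _ _ (by norm_num) (by norm_num)]; norm_num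
  have hhalf : a ^ (1 / 2 : ℝ) ≤ b ^ (1 / 2 : ℝ) :=
    (ENNReal.mul_le_mul_iff_right (by simp [ha0]) (by simp [ha])).1 ((hsq a).symm.trans_le h)
  rw [hsq a, hsq b]
  gcongr

end ENNReal

namespace MeasureTheory

variable {α E ι : Type*} [MeasurableSpace α] {μ : Measure α} [NormedAddCommGroup E]
  {l : Filter ι}

theorem ofReal_integral_inner_le [InnerProductSpace ℝ E] {f g : α → E} {p q : ℝ}
    (hpq : p.HolderConjugate q) (hf : AEStronglyMeasurable f μ) (hg : AEStronglyMeasurable g μ) :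
    ENNReal.ofReal (∫ x, ⟪f x, g x⟫ ∂μ) ≤
      (∫⁻ x, ‖f x‖ₑ ^ p ∂μ) ^ (1 / p) * (∫⁻ x, ‖g x‖ₑ ^ q ∂μ) ^ (1 / q) :=
  calc ENNReal.ofReal (∫ x, ⟪f x, g x⟫ ∂μ) ≤ ‖∫ x, ⟪f x, g x⟫ ∂μ‖ₑ := by
        rw [Real.enorm_eq_ofReal_abs]; exact ofReal_le_ofReal (le_abs_self _)
    _ ≤ ∫⁻ x, ‖⟪f x, g x⟫‖ₑ ∂μ := enorm_integral_le_lintegral_enorm _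
    _ ≤ ∫⁻ x, ‖f x‖ₑ * ‖g x‖ₑ ∂μ := lintegral_mono fun x => by
        simpa [enorm_eq_nnnorm, ← ENNReal.coe_mul] using nnnorm_inner_le_nnnorm (f x) (g x)
    _ ≤ _ := ENNReal.lintegral_mul_le_Lp_mul_Lq μ hpq hf.enorm hg.enorm

theorem lintegral_rpow_le_lintegral_rpow_mul {f : α → ℝ≥0∞} {C : ℝ≥0∞} (hC : C ≠ ⊤)
    (hfC : ∀ᵐ x ∂μ, f x ≤ C) {r s : ℝ} (hr : 0 ≤ r) (hrs : r ≤ s) :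
    ∫⁻ x, f x ^ s ∂μ ≤ (∫⁻ x, f x ^ r ∂μ) * C ^ (s - r) :=
  calc ∫⁻ x, f x ^ s ∂μ ≤ ∫⁻ x, f x ^ r * C ^ (s - r) ∂μ :=
        lintegral_mono_ae (hfC.mono fun _ hx => rpow_le_rpow_mul_rpow_sub hx hr hrs)
    _ = (∫⁻ x, f x ^ r ∂μ) * C ^ (s - r) :=
        lintegral_mul_const' _ _ (rpow_ne_top_of_nonneg (sub_nonneg.2 hrs) hC)

theorem limsup_lintegral_rpow_le_of_ae_le [l.NeBot] {f : α → ℝ≥0∞} {C : ℝ≥0∞} (hC : C ≠ ⊤)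
    (hfC : ∀ᵐ x ∂μ, f x ≤ C) {s : ι → ℝ} {r : ℝ} (hr : 0 < r) (hs : Tendsto s l (𝓝 r))
    (hrs : ∀ᶠ i in l, r ≤ s i) :
    limsup (fun i => (∫⁻ x, f x ^ s i ∂μ) ^ (1 / s i)) l ≤ (∫⁻ x, f x ^ r ∂μ) ^ (1 / r) := by
  set J := ∫⁻ x, f x ^ r ∂μ
  have hC1 : C + 1 ≠ ⊤ := add_ne_top.2 ⟨hC, one_ne_top⟩
  have hfC1 : ∀ᵐ x ∂μ, f x ≤ C + 1 := hfC.mono fun _ hx => hx.trans le_self_add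
  have hbound : ∀ᶠ i in l, (∫⁻ x, f x ^ s i ∂μ) ^ (1 / s i) ≤
      J ^ (1 / s i) * (C + 1) ^ ((s i - r) * (1 / s i)) := hrs.mono fun i hi => by
    have hsi : 0 ≤ 1 / s i := by have := hr.trans_le hi; positivity
    calc (∫⁻ x, f x ^ s i ∂μ) ^ (1 / s i) ≤ (J * (C + 1) ^ (s i - r)) ^ (1 / s i) := by
          gcongr; exact lintegral_rpow_le_lintegral_rpow_mul hC1 hfC1 hr.le hi
      _ = J ^ (1 / s i) * (C + 1) ^ ((s i - r) * (1 / s i)) := by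
          rw [mul_rpow_of_nonneg _ _ hsi, rpow_mul]
  have hinv : Tendsto (fun i => 1 / s i) l (𝓝 (1 / r)) := tendsto_const_nhds.div hs hr.ne'
  have hlim : Tendsto (fun i => J ^ (1 / s i) * (C + 1) ^ ((s i - r) * (1 / s i))) l
      (𝓝 (J ^ (1 / r) * 1)) := by
    refine ENNReal.Tendsto.mul (tendsto_const_rpow_of_pos J (by positivity) hinv)
      (Or.inr one_ne_top) ?_ (Or.inl one_ne_zero)
    simpa using tendsto_const_rpow (by simp) hC1 ((hs.sub_const r).mul hinv)
  simpa using (limsup_le_limsup hbound).trans_eq hlim.limsup_eq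

theorem ofReal_integral_norm_sq_eq_lintegral {g : α → E} (hg : MemLp g 2 μ) :
    ENNReal.ofReal (∫ x, ‖g x‖ ^ 2 ∂μ) = ∫⁻ x, ‖g x‖ₑ ^ (2 : ℝ) ∂μ := by
  rw [ofReal_integral_eq_lintegral_ofReal (hg.integrable_norm_pow two_ne_zero)
    (ae_of_all _ fun x => by positivity)]
  refine lintegral_congr fun x => ?_
  rw [ofReal_pow (norm_nonneg _), ofReal_norm, rpow_two]

theorem lintegral_enorm_sq_le_liminf_of_tendsto_integral_inner [InnerProductSpace ℝ E] [l.NeBot]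
    {v : ι → α → E} {g : α → E} {p : ι → ℝ} {M : ℝ≥0∞} {C : ℝ} (hp : Tendsto p l (𝓝 2))
    (hp2 : ∀ᶠ i in l, p i ≤ 2)
    (hv : ∀ i, AEStronglyMeasurable (v i) μ) (hM : M ≠ ⊤)
    (hvM : ∀ᶠ i in l, ∫⁻ x, ‖v i x‖ₑ ^ p i ∂μ ≤ M) (hg : MemLp g 2 μ)
    (hgC : ∀ᵐ x ∂μ, ‖g x‖ ≤ C)
    (hlim : Tendsto (fun i => ∫ x, ⟪v i x, g x⟫ ∂μ) l (𝓝 (∫ x, ‖g x‖ ^ 2 ∂μ))) :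
    ∫⁻ x, ‖g x‖ₑ ^ (2 : ℝ) ∂μ ≤ liminf (fun i => ∫⁻ x, ‖v i x‖ₑ ^ p i ∂μ) l := by
  set I := fun i => ∫⁻ x, ‖v i x‖ₑ ^ p i ∂μ
  set J := ∫⁻ x, ‖g x‖ₑ ^ (2 : ℝ) ∂μ
  set s := fun i => (p i).conjExponent
  have hJ : ENNReal.ofReal (∫ x, ‖g x‖ ^ 2 ∂μ) = J := ofReal_integral_norm_sq_eq_lintegral hg
  have hp1 : ∀ᶠ i in l, 1 < p i := hp.eventually_const_lt one_lt_two
  have hs : Tendsto s l (𝓝 2) := by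
    rw [show (2 : ℝ) = 2 / (2 - 1) by norm_num]
    exact hp.div (hp.sub_const 1) (by norm_num)
  have h2s : ∀ᶠ i in l, 2 ≤ s i := (hp1.and hp2).mono fun i ⟨h1, h2⟩ => by
    change 2 ≤ p i / (p i - 1)
    rw [le_div_iff₀ (by linarith)]; linarith
  have hV : liminf (fun i => I i ^ (1 / p i)) l ≤ liminf I l ^ (1 / 2 : ℝ) :=
    liminf_rpow_le hM hvM (by norm_num) (tendsto_const_nhds.div hp two_ne_zero)
      ((hp1.and hp2).mono fun i ⟨h1, h2⟩ => one_div_le_one_div_of_le (by linarith) h2)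
  have hG : limsup (fun i => (∫⁻ x, ‖g x‖ₑ ^ s i ∂μ) ^ (1 / s i)) l ≤ J ^ (1 / 2 : ℝ) :=
    limsup_lintegral_rpow_le_of_ae_le ofReal_ne_top
      (hgC.mono fun x hx => by rw [← ofReal_norm]; exact ofReal_le_ofReal hx)
      two_pos hs h2s
  have hIM : liminf I l ^ (1 / 2 : ℝ) ≠ ⊤ :=
    rpow_ne_top_of_nonneg (by norm_num) (ne_top_of_le_ne_top hM
      ((liminf_le_liminf hvM).trans_eq (liminf_const M)))
  have hJtop : J ≠ ⊤ := by rw [← hJ]; exact ofReal_ne_top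
  refine le_of_le_rpow_half_mul hJtop ?_
  calc J = liminf (fun i => ENNReal.ofReal (∫ x, ⟪v i x, g x⟫ ∂μ)) l :=
        (hJ ▸ ((ENNReal.continuous_ofReal.tendsto _).comp hlim).liminf_eq).symm
    _ ≤ liminf ((fun i => (∫⁻ x, ‖g x‖ₑ ^ s i ∂μ) ^ (1 / s i)) * fun i => I i ^ (1 / p i)) l :=
        liminf_le_liminf (hp1.mono fun i hi => by
          rw [Pi.mul_apply, mul_comm]
          exact ofReal_integral_inner_le (Real.HolderConjugate.conjExponent hi) (hv i) hg.1)
    _ ≤ limsup (fun i => (∫⁻ x, ‖g x‖ₑ ^ s i ∂μ) ^ (1 / s i)) l *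
          liminf (fun i => I i ^ (1 / p i)) l :=
        ENNReal.liminf_mul_le (Or.inr (ne_top_of_le_ne_top hIM hV))
          (Or.inl (ne_top_of_le_ne_top (rpow_ne_top_of_nonneg (by norm_num) hJtop) hG))
    _ ≤ J ^ (1 / 2 : ℝ) * liminf I l ^ (1 / 2 : ℝ) := by gcongr

theorem lintegral_enorm_rpow_eq_iSup_indicator [MeasurableSpace E] [OpensMeasurableSpace E]
    {f : α → E} (hf : Measurable f) {r : ℝ} (hr : 0 < r) :
    ∫⁻ x, ‖f x‖ₑ ^ r ∂μ = ⨆ n : ℕ, ∫⁻ x, ‖{x | ‖f x‖ ≤ n}.indicator f x‖ₑ ^ r ∂μ := by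
  have hind : ∀ (n : ℕ) x, ‖{x | ‖f x‖ ≤ n}.indicator f x‖ₑ ^ r =
      {x | ‖f x‖ ≤ n}.indicator (fun x => ‖f x‖ₑ ^ r) x := fun n x => by
    by_cases hx : ‖f x‖ ≤ n <;> simp [hx, zero_rpow_of_pos hr]
  simp_rw [hind]
  rw [← lintegral_iSup (fun n => (hf.enorm.pow_const r).indicator
    (measurableSet_le hf.norm measurable_const))]
  · refine lintegral_congr fun x => le_antisymm ?_ (iSup_le fun n => Set.indicator_le_self _ _ x)
    refine le_iSup_of_le ⌈‖f x‖⌉₊ ?_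
    simp [Nat.le_ceil]
  · exact fun n k hnk => Set.indicator_le_indicator_of_subset
      (fun x (hx : ‖f x‖ ≤ n) => hx.trans (Nat.cast_le.2 hnk)) (fun _ => zero_le)

end MeasureTheory

open MeasureTheory

theorem fatou_varying_exponents_general (d m : ℕ)
    (Ω : Set (EuclideanSpace ℝ (Fin d))) (hΩb : Bornology.IsBounded Ω)
    (p : ℕ → ℝ) (hp : ∀ n, p n ∈ Set.Ico (1:ℝ) 2)
    (hptend : Tendsto p atTop (nhds 2))
    (v : ℕ → EuclideanSpace ℝ (Fin d) → EuclideanSpace ℝ (Fin m))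
    (hvmeas : ∀ n, Measurable (v n))
    (hbound : (⨆ n, ∫⁻ x in Ω, (‖v n x‖₊ : ℝ≥0∞) ^ (p n) ∂volume) < ⊤)
    (w : EuclideanSpace ℝ (Fin d) → EuclideanSpace ℝ (Fin m)) (hwmeas : Measurable w)
    (hweak : ∀ q : ℝ, 1 < q → q < 2 →
      ∀ g : EuclideanSpace ℝ (Fin d) → EuclideanSpace ℝ (Fin m),
        MemLp g (ENNReal.ofReal (q / (q - 1))) (volume.restrict Ω) →
        Tendsto (fun n => ∫ x in Ω, ⟪v n x, g x⟫) atTop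
          (nhds (∫ x in Ω, ⟪w x, g x⟫))) :
    ∫⁻ x in Ω, (‖w x‖₊ : ℝ≥0∞) ^ (2:ℝ) ∂volume ≤
      liminf (fun n => ∫⁻ x in Ω, (‖v n x‖₊ : ℝ≥0∞) ^ (p n) ∂volume) atTop := by
  have : IsFiniteMeasure (volume.restrict Ω) := isFiniteMeasure_restrict.2 hΩb.measure_lt_top.ne
  simp only [← enorm_eq_nnnorm] at hbound ⊢
  rw [lintegral_enorm_rpow_eq_iSup_indicator hwmeas two_pos]
  refine iSup_le fun R => ?_
  set g := {x | ‖w x‖ ≤ R}.indicator w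
  have hg_le : ∀ x, ‖g x‖ ≤ R := fun x => by
    by_cases hx : ‖w x‖ ≤ R <;> simp [g, hx]
  have hg_meas : Measurable g := hwmeas.indicator (measurableSet_le hwmeas.norm measurable_const)
  have hg : ∀ q, MemLp g q (volume.restrict Ω) := fun q =>
    .of_bound hg_meas.aestronglyMeasurable R (ae_of_all _ hg_le)
  have hwg : ∀ x, ⟪w x, g x⟫ = ‖g x‖ ^ 2 := fun x => by
    by_cases hx : ‖w x‖ ≤ R <;> simp [g, hx]
  refine lintegral_enorm_sq_le_liminf_of_tendsto_integral_inner hptend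
    (.of_forall fun n => (hp n).2.le) (fun n => (hvmeas n).aestronglyMeasurable) hbound.ne
    (.of_forall fun n => le_iSup (fun n => ∫⁻ x in Ω, ‖v n x‖ₑ ^ p n) n) (hg 2)
    (ae_of_all _ hg_le) ?_
  simpa only [hwg] using hweak (3 / 2) (by norm_num) (by norm_num) g (hg _)

/-- Fatou-type lower semicontinuity with varying exponents (Proposition 5.2 of the
paper): if `sup_n ∫_Ω |v_n|^{p_n} < ∞` with `p_n ↗ 2` and `v_n ⇀ v` weakly in `L^p(Ω)`
for every `p ∈ (1,2)`, then `∫_Ω |v|² ≤ liminf ∫_Ω |v_n|^{p_n}`. -/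
theorem fatou_varying_exponents (d m : ℕ)
    (Ω : Set (EuclideanSpace ℝ (Fin d))) (hΩb : Bornology.IsBounded Ω)
    (hΩm : MeasurableSet Ω)
    (p : ℕ → ℝ) (hp : ∀ n, p n ∈ Set.Ico (1:ℝ) 2) (hpmono : Monotone p)
    (hptend : Tendsto p atTop (nhds 2))
    (v : ℕ → EuclideanSpace ℝ (Fin d) → EuclideanSpace ℝ (Fin m))
    (hvmeas : ∀ n, Measurable (v n))
    (hbound : (⨆ n, ∫⁻ x in Ω, (‖v n x‖₊ : ℝ≥0∞) ^ (p n) ∂volume) < ⊤)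
    (w : EuclideanSpace ℝ (Fin d) → EuclideanSpace ℝ (Fin m)) (hwmeas : Measurable w)
    (hweakLp : ∀ q : ℝ, 1 < q → q < 2 →
      ∀ᶠ n in atTop, MemLp (v n) (ENNReal.ofReal q) (volume.restrict Ω))
    (hweak : ∀ q : ℝ, 1 < q → q < 2 →
      ∀ g : EuclideanSpace ℝ (Fin d) → EuclideanSpace ℝ (Fin m),
        MemLp g (ENNReal.ofReal (q / (q - 1))) (volume.restrict Ω) →
        Tendsto (fun n => ∫ x in Ω, ⟪v n x, g x⟫) atTop
          (nhds (∫ x in Ω, ⟪w x, g x⟫))) :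
    ∫⁻ x in Ω, (‖w x‖₊ : ℝ≥0∞) ^ (2:ℝ) ∂volume ≤
      liminf (fun n => ∫⁻ x in Ω, (‖v n x‖₊ : ℝ≥0∞) ^ (p n) ∂volume) atTop :=
  fatou_varying_exponents_general d m Ω hΩb p hp hptend v hvmeas hbound w hwmeas hweak
end

section
/- Let (X, μ) be a measure space, let U_n, U : X → ℝ be measurable functions such that U_n → U in measure (for every ε > 0, μ({|U_n − U| > ε}) → 0), and let (p_n) be a sequence in [1,∞) converging to p ∈ [1,∞). Then sup_{t>0} t^p · μ({x : |U(x)| > t}) ≤ liminf_{n→∞} sup_{t>0} t^{p_n} · μ({x : |U_n(x)| > t}). -/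
open MeasureTheory Filter ENNReal
open scoped Topology

/-!
If `|U x| > t` then either `|Uₙ x| > s` or `|Uₙ x - U x| > t - s`, and the second set has
vanishing measure, so `μ {|U| > t} ≤ liminf μ {|Uₙ| > s}` for every `s < t`. Multiplying by
`s ^ q = lim s ^ pₙ` bounds `s ^ q μ {|U| > t}` by the liminf of the quasinorms, and letting
`s ↑ t` gives the bound for `t ^ q μ {|U| > t}`.
-/

lemma setOf_lt_norm_subset_union {X E : Type*} [SeminormedAddGroup E] (f g : X → E) {s t : ℝ} :
    {x | t < ‖f x‖} ⊆ {x | s < ‖g x‖} ∪ {x | t - s < ‖g x - f x‖} := by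
  intro x hx
  by_contra! h
  simp only [Set.mem_union, Set.mem_ofPred_eq, not_or, not_lt] at h hx
  linarith [norm_le_norm_add_norm_sub (g x) (f x)]

lemma measure_lt_norm_le_liminf_of_tendsto {X E ι : Type*} [MeasurableSpace X]
    [SeminormedAddGroup E] {μ : Measure X} {l : Filter ι} {g : ι → X → E} {f : X → E}
    (hgf : ∀ ε : ℝ, 0 < ε → Tendsto (fun i => μ {x | ε < ‖g i x - f x‖}) l (𝓝 0))
    {s t : ℝ} (hst : s < t) :
    μ {x | t < ‖f x‖} ≤ liminf (fun i => μ {x | s < ‖g i x‖}) l := by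
  rw [← liminf_add_of_right_tendsto_zero (hgf (t - s) (sub_pos.2 hst))]
  refine le_liminf_of_le (by isBoundedDefault) (.of_forall fun i => ?_)
  exact (measure_mono (setOf_lt_norm_subset_union f (g i))).trans (measure_union_le _ _)

lemma ofReal_rpow_mul_le_of_forall_Ioo {q t : ℝ} {m L : ℝ≥0∞} (ht : 0 < t)
    (h : ∀ s ∈ Set.Ioo 0 t, ENNReal.ofReal (s ^ q) * m ≤ L) :
    ENNReal.ofReal (t ^ q) * m ≤ L := by
  have hcont : Tendsto (fun s : ℝ => ENNReal.ofReal (s ^ q)) (𝓝[<] t)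
      (𝓝 (ENNReal.ofReal (t ^ q))) :=
    (ENNReal.continuous_ofReal.tendsto _).comp
      ((Real.continuousAt_rpow_const t q (Or.inl ht.ne')).tendsto.mono_left nhdsWithin_le_nhds)
  have hne : ENNReal.ofReal (t ^ q) ≠ 0 := (ENNReal.ofReal_pos.2 (Real.rpow_pos_of_pos ht q)).ne'
  refine le_of_tendsto (ENNReal.Tendsto.mul_const hcont (.inl hne)) ?_
  filter_upwards [Ioo_mem_nhdsLT ht] with s hs using h s hs

theorem marcinkiewicz_lsc_general {X : Type*} [MeasurableSpace X] (μ : Measure X)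
    (Un : ℕ → X → ℝ) (U : X → ℝ)
    (hmeas : ∀ ε : ℝ, 0 < ε →
      Tendsto (fun n => μ {x | ε < |Un n x - U x|}) atTop (nhds 0))
    (p : ℕ → ℝ) (q : ℝ)
    (hpq : Tendsto p atTop (nhds q)) :
    (⨆ t ∈ Set.Ioi (0:ℝ), ENNReal.ofReal (t ^ q) * μ {x | t < |U x|}) ≤
      liminf (fun n =>
        ⨆ t ∈ Set.Ioi (0:ℝ), ENNReal.ofReal (t ^ p n) * μ {x | t < |Un n x|}) atTop := by
  refine iSup₂_le fun t ht => ofReal_rpow_mul_le_of_forall_Ioo ht fun s ⟨hs, hst⟩ => ?_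
  have hdist : μ {x | t < |U x|} ≤ liminf (fun n => μ {x | s < |Un n x|}) atTop := by
    simpa only [Real.norm_eq_abs] using
      measure_lt_norm_le_liminf_of_tendsto (g := Un) (f := U)
        (by simpa only [Real.norm_eq_abs] using hmeas) hst
  have hcoef : Tendsto (fun n => ENNReal.ofReal (s ^ p n)) atTop (𝓝 (ENNReal.ofReal (s ^ q))) :=
    (ENNReal.continuous_ofReal.tendsto _).comp (tendsto_const_nhds.rpow hpq (.inl hs.ne'))
  calc ENNReal.ofReal (s ^ q) * μ {x | t < |U x|}
      ≤ liminf (fun n => ENNReal.ofReal (s ^ p n)) atTop *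
          liminf (fun n => μ {x | s < |Un n x|}) atTop := by
        rw [hcoef.liminf_eq]
        gcongr
    _ ≤ liminf (fun n => ENNReal.ofReal (s ^ p n) * μ {x | s < |Un n x|}) atTop :=
        ENNReal.le_liminf_mul
    _ ≤ _ := liminf_le_liminf (.of_forall fun n =>
        le_biSup (fun t => ENNReal.ofReal (t ^ p n) * μ {x | t < |Un n x|}) hs)

/-- Lemma 5.11 of the paper: lower semicontinuity of the weak-`L^p` (Marcinkiewicz)
quasinorm under convergence in measure with varying exponents. -/
theorem marcinkiewicz_lsc {X : Type*} [MeasurableSpace X] (μ : Measure X)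
    (Un : ℕ → X → ℝ) (U : X → ℝ)
    (hUn : ∀ n, Measurable (Un n)) (hU : Measurable U)
    (hmeas : ∀ ε : ℝ, 0 < ε →
      Tendsto (fun n => μ {x | ε < |Un n x - U x|}) atTop (nhds 0))
    (p : ℕ → ℝ) (q : ℝ) (hp : ∀ n, 1 ≤ p n) (hq : 1 ≤ q)
    (hpq : Tendsto p atTop (nhds q)) :
    (⨆ t ∈ Set.Ioi (0:ℝ), ENNReal.ofReal (t ^ q) * μ {x | t < |U x|}) ≤
      liminf (fun n =>
        ⨆ t ∈ Set.Ioi (0:ℝ), ENNReal.ofReal (t ^ p n) * μ {x | t < |Un n x|}) atTop :=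
  marcinkiewicz_lsc_general μ Un U hmeas p q hpq
end

section
/- If p ∈ (1,2] and x ≥ 0 is a real number satisfying 2 ≥ (1 + x)^p + |1 − x|^p, then x = 0. -/
/-- Lemma 6.4 of the paper: if `p ∈ (1,2]` and `x ≥ 0` satisfies
`2 ≥ (1+x)^p + |1-x|^p`, then `x = 0`. -/
theorem hanner_aux (p x : ℝ) (hp1 : 1 < p) (hp2 : p ≤ 2) (hx : 0 ≤ x)
    (h : (1 + x) ^ p + |1 - x| ^ p ≤ 2) : x = 0 := by
  by_contra hne
  have hxpos : 0 < x := lt_of_le_of_ne hx (Ne.symm hne)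
  set a : ℝ := 1 + x with ha
  set b : ℝ := |1 - x| with hb
  have hane : a ≠ b := by
    rcases abs_cases (1 - x) with ⟨h1, h2⟩ | ⟨h1, h2⟩ <;> simp [ha, hb, h1] <;> nlinarith
  have ha0 : (0:ℝ) ≤ a := by positivity
  have hb0 : (0:ℝ) ≤ b := abs_nonneg _
  have hmid : (1:ℝ) ≤ (a + b) / 2 := by
    rcases abs_cases (1 - x) with ⟨h1, h2⟩ | ⟨h1, h2⟩ <;> simp [ha, hb, h1] <;> nlinarith
  have hsc := (strictConvexOn_rpow hp1).2 (Set.mem_Ici.2 ha0) (Set.mem_Ici.2 hb0) hane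
    (by norm_num : (0:ℝ) < 1/2) (by norm_num : (0:ℝ) < 1/2) (by norm_num)
  have hconv : ((a + b) / 2) ^ p < (a ^ p + b ^ p) / 2 := by
    have := hsc
    simp only [smul_eq_mul] at this
    calc ((a + b) / 2) ^ p = ((1/2)*a + (1/2)*b) ^ p := by ring_nf
      _ < (1/2) * a ^ p + (1/2) * b ^ p := this
      _ = (a ^ p + b ^ p) / 2 := by ring
  have h1 : (1:ℝ) ≤ ((a + b) / 2) ^ p :=
    Real.one_le_rpow hmid (le_of_lt (lt_trans one_pos hp1))
  linarith
end
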